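/- Let S be an ideal monad on a category A with finite coproducts and monomorphic coproduct injections, with S = S' + Id (injections σ : S' → S and η) and μ' : S'S → S' restricting μ. Then the natural transformation λ = ησ_{S'} ∘ μ' : S'S → SS' is a distributive law of the functor S' over the monad S, i.e., λ ∘ S'η = ηS' and λ ∘ S'μ = μS' ∘ Sλ ∘ λS. -/
import Mathlib


open CategoryTheory CategoryTheory.Limits

/-- For an ideal monad `(S, η, μ, S', σ, μ')` on a category `A` with finite coproducts
whose injections are monomorphic (so `S = S' + Id` with injections `σ` and `η`, and `μ`
restricts to `μ'` along `σ`), the natural transformation `λ = ησ_{S'} ∘ μ' : S'S → SS'`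
is a distributive law of the functor `S'` over the monad `S`:
`λ ∘ S'η = ηS'` and `λ ∘ S'μ = μS' ∘ Sλ ∘ λS`. -/
theorem stmt17 {A : Type*} [Category A] [HasBinaryCoproducts A]
    (hmono : ∀ U V : A,
      Mono (coprod.inl : U ⟶ U ⨿ V) ∧ Mono (coprod.inr : V ⟶ U ⨿ V))
    (T : Monad A) (S' : A ⥤ A) (σ : S' ⟶ T.toFunctor)
    (μ' : T.toFunctor ⋙ S' ⟶ S')
    (hcoprod : ∀ U : A, Nonempty (IsColimit (BinaryCofan.mk (σ.app U) (T.η.app U))))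
    (hrestrict : ∀ U : A, σ.app (T.obj U) ≫ T.μ.app U = μ'.app U ≫ σ.app U) :
    (∀ U : A,
      S'.map (T.η.app U) ≫ μ'.app U ≫ T.η.app (S'.obj U) = T.η.app (S'.obj U)) ∧
    (∀ U : A,
      S'.map (T.μ.app U) ≫ μ'.app U ≫ T.η.app (S'.obj U)
        = (μ'.app (T.obj U) ≫ T.η.app (S'.obj (T.obj U))) ≫
            T.map (μ'.app U ≫ T.η.app (S'.obj U)) ≫ T.μ.app (S'.obj U)) := by
  -- σ.app U is a mono for each U
  have hσmono : ∀ U : A, Mono (σ.app U) := by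
    intro U
    obtain ⟨h⟩ := hcoprod U
    have hm := (hmono (S'.obj U) U).1
    let φ : T.obj U ⟶ S'.obj U ⨿ U :=
      h.desc (BinaryCofan.mk coprod.inl coprod.inr)
    have hfac : σ.app U ≫ φ = (coprod.inl : S'.obj U ⟶ S'.obj U ⨿ U) :=
      h.fac (BinaryCofan.mk coprod.inl coprod.inr) ⟨WalkingPair.left⟩
    have : Mono (σ.app U ≫ φ) := by rw [hfac]; exact hm
    exact mono_of_mono (σ.app U) φ
  constructor
  · intro U
    have key : S'.map (T.η.app U) ≫ μ'.app U = 𝟙 (S'.obj U) := by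
      have := hσmono U
      rw [← cancel_mono (σ.app U)]
      have hnat := σ.naturality (T.η.app U)
      simp only [Category.assoc, ← hrestrict U, Category.id_comp]
      rw [reassoc_of% hnat]
      simp
    rw [reassoc_of% key]
  · intro U
    -- simplify RHS using naturality of η and left unit
    have hnatη := T.η.naturality (μ'.app U ≫ T.η.app (S'.obj U))
    have key : S'.map (T.μ.app U) ≫ μ'.app U = μ'.app (T.obj U) ≫ μ'.app U := by
      have := hσmono U
      rw [← cancel_mono (σ.app U)]
      have hnatσ := σ.naturality (T.μ.app U)
      simp only [Category.assoc, ← hrestrict U]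
      rw [reassoc_of% hnatσ]
      have hr := hrestrict (T.obj U)
      calc σ.app (T.obj (T.obj U)) ≫ T.map (T.μ.app U) ≫ T.μ.app U
          = σ.app (T.obj (T.obj U)) ≫ T.μ.app (T.obj U) ≫ T.μ.app U := by
            rw [T.assoc U]
        _ = μ'.app (T.obj U) ≫ σ.app (T.obj U) ≫ T.μ.app U := by
            rw [reassoc_of% hr]
        _ = μ'.app (T.obj U) ≫ μ'.app U ≫ σ.app U := by rw [hrestrict U]
      rw [hrestrict U]
    calc S'.map (T.μ.app U) ≫ μ'.app U ≫ T.η.app (S'.obj U)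
        = μ'.app (T.obj U) ≫ μ'.app U ≫ T.η.app (S'.obj U) := by
          rw [← Category.assoc, key, Category.assoc]
      _ = μ'.app (T.obj U) ≫ (μ'.app U ≫ T.η.app (S'.obj U)) ≫
            T.η.app (T.obj (S'.obj U)) ≫ T.μ.app (S'.obj U) := by
          simp
      _ = (μ'.app (T.obj U) ≫ T.η.app (S'.obj (T.obj U))) ≫
            T.map (μ'.app U ≫ T.η.app (S'.obj U)) ≫ T.μ.app (S'.obj U) := by
          simp only [Category.assoc]
          rw [← reassoc_of% hnatη]
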